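/- Let 𝐟₂ : ℕ → ℕ^d be a vector sequence of dimension d that tends to infinity, and let 𝐟 : ℕ → ℕ* be a vector sequence such that at every position its vector has dimension at most d. Then 𝐟 is an asymptotic mix of some vector sequence 𝐠₂ with 𝐠₂ ≤ 𝐟₂ pointwise and 𝐠₂ of dimension d. -/
import Mathlib


def BddOnP (f : ℕ → ℕ) (S : Set ℕ) : Prop := ∃ B, ∀ i ∈ S, f i ≤ B

def AsympEquiv (f g : ℕ → ℕ) : Prop := ∀ S : Set ℕ, BddOnP f S ↔ BddOnP g S

def MemLS (f : ℕ → ℕ) (F : ℕ → List ℕ) : Prop := ∀ i, f i ∈ F i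

def IsMixL (F G : ℕ → List ℕ) : Prop :=
  ∀ f : ℕ → ℕ, MemLS f F → ∃ g : ℕ → ℕ, MemLS g G ∧ AsympEquiv f g

def LeL (G F : ℕ → List ℕ) : Prop := ∀ i, List.Forall₂ (· ≤ ·) (G i) (F i)

def TendsInftyL (F : ℕ → List ℕ) : Prop := ∀ n : ℕ, {i : ℕ | ∃ x ∈ F i, x < n}.Finite

def BddDim (F : ℕ → List ℕ) : Prop := ∃ d, ∀ i, (F i).length ≤ d

def TendsInfty (f : ℕ → ℕ) : Prop := ∀ n : ℕ, {i : ℕ | f i < n}.Finite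

def MemVS {d : ℕ} (f : ℕ → ℕ) (F : ℕ → Fin d → ℕ) : Prop := ∀ i, ∃ j, f i = F i j

def TendsInftyV {d : ℕ} (F : ℕ → Fin d → ℕ) : Prop :=
  ∀ n : ℕ, {i : ℕ | ∃ j, F i j < n}.Finite

theorem stmt_6 (d : ℕ) (F₂ : ℕ → Fin d → ℕ) (hF₂ : TendsInftyV F₂)
    (F : ℕ → List ℕ) (hdim : ∀ i, (F i).length ≤ d) :
    ∃ G₂ : ℕ → Fin d → ℕ, (∀ i j, G₂ i j ≤ F₂ i j) ∧
      ∀ f : ℕ → ℕ, MemLS f F → ∃ g : ℕ → ℕ, MemVS g G₂ ∧ AsympEquiv f g := by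
  refine ⟨fun i j => min (F₂ i j) ((F i).getD j (F₂ i j)), fun i j => min_le_left _ _, ?_⟩
  intro f hf
  have hk : ∀ i, ∃ k : Fin (F i).length, (F i).get k = f i := by
    intro i
    exact List.mem_iff_get.mp (hf i)
  choose k hk using hk
  set j : ∀ i, Fin d := fun i => ⟨(k i).1, lt_of_lt_of_le (k i).2 (hdim i)⟩ with hj
  refine ⟨fun i => min (F₂ i (j i)) (f i), ?_, ?_⟩
  · intro i
    refine ⟨j i, ?_⟩
    have : (F i).getD ((j i) : ℕ) (F₂ i (j i)) = f i := by
      rw [List.getD_eq_getElem _ _ (k i).2]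
      exact hk i
    simp only []
    rw [this]
  · intro S
    constructor
    · rintro ⟨B, hB⟩
      exact ⟨B, fun i hi => le_trans (min_le_right _ _) (hB i hi)⟩
    · rintro ⟨B, hB⟩
      have hT : {i : ℕ | ∃ j, F₂ i j < B + 1}.Finite := hF₂ (B + 1)
      refine ⟨max B (hT.toFinset.sup f), fun i hi => ?_⟩
      rcases le_or_gt (f i) (F₂ i (j i)) with h | h
      · have := hB i hi
        simp only [min_eq_right h] at this
        exact le_trans this (le_max_left _ _)
      · have hiT : i ∈ hT.toFinset := by
          simp only [Set.Finite.mem_toFinset, Set.mem_setOf_eq]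
          have := hB i hi
          simp only [min_eq_left h.le] at this
          exact ⟨j i, by omega⟩
        exact le_trans (Finset.le_sup hiT) (le_max_right _ _)
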